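/- arXiv:2006.14512 — 3 statements merged into one kernel-verified Lean document; each statement's English description precedes it below -/
import Mathlib

section
/- Let h : R^n -> R^k be differentiable with h(x0) = 0 for some fixed x0, and assume its transposed Jacobian is beta-smooth in the H-norm: ||nabla h(x1)^T - nabla h(x2)^T||_H <= beta ||x1 - x2||_2 for all x1, x2. Then for every x and every tau > 0, there exists x' with ||x - x'||_2 <= tau such that ||h(x)||_H^2 <= 2( ||nabla h(x')^T||_H^2 + beta^2 ((||x - x0||_2 - tau)_+)^2 ) * ||x - x0||_2^2, where (t)_+ = max(t, 0). -/
/-!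
Factor `H = Bᵀ B`, so that `‖z‖_H = ‖B z‖₂` and `‖M‖_H = ‖B M‖_F`, and let
`N y = ‖B ∇h(y)ᵀ‖_F`, which is `β`-Lipschitz. With `r = ‖x - x₀‖`, the mean value inequality
along the segment from `x₀` to `x` gives `‖B h(x)‖ ≤ r · sup N`. Take for `x'` a maximiser of `N`
on the final piece of the segment of length `min τ r`: every point of the segment lies within
`(r - τ)₊` of that piece, so `sup N ≤ N x' + β (r - τ)₊`. Conclude with `(a + b)² ≤ 2 (a² + b²)`.
-/

open Matrix

open Set WithLp

theorem exists_mem_Icc_forall_le_add_mul {φ : ℝ → ℝ} {L a b t₀ : ℝ}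
    (hφ : ∀ s t, φ s ≤ φ t + L * dist s t) (ht₀ : t₀ ∈ Icc a b) :
    ∃ t₁ ∈ Icc t₀ b, ∀ t ∈ Icc a b, φ t ≤ φ t₁ + L * (t₀ - a) := by
  have hL : 0 ≤ L := by
    have h₀₁ := hφ 0 1
    have h₁₀ := hφ 1 0
    norm_num [Real.dist_eq] at h₀₁ h₁₀
    linarith
  obtain ⟨t₁, ht₁, hmax⟩ := isCompact_Icc.exists_isMaxOn (nonempty_Icc.2 ht₀.2)
    (LipschitzWith.of_le_add_mul' L hφ).continuous.continuousOn
  refine ⟨t₁, ht₁, fun t ht => ?_⟩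
  rcases le_total t₀ t with h | h
  · have : φ t ≤ φ t₁ := hmax ⟨h, ht.2⟩
    nlinarith [ht₀.1]
  · have : φ t₀ ≤ φ t₁ := hmax ⟨le_rfl, ht₀.2⟩
    calc φ t ≤ φ t₀ + L * (t₀ - t) := by
          simpa [Real.dist_eq, abs_of_nonpos (sub_nonpos.2 h)] using hφ t t₀
      _ ≤ φ t₁ + L * (t₀ - a) := by nlinarith [ht.1]

section MeanValue

variable {E F : Type*} [NormedAddCommGroup E] [NormedSpace ℝ E] [NormedAddCommGroup F]
  [NormedSpace ℝ F]

theorem exists_dist_le_and_norm_sub_le {g : E → F} {g' : E → E →L[ℝ] F}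
    (hg : ∀ y, HasFDerivAt g (g' y) y) {N : E → ℝ} (hg'N : ∀ y v, ‖g' y v‖ ≤ N y * ‖v‖)
    {β : ℝ} (hN : ∀ y₁ y₂, N y₁ ≤ N y₂ + β * dist y₁ y₂) (x₀ x : E) {τ : ℝ} (hτ : 0 ≤ τ) :
    ∃ x', dist x x' ≤ τ ∧
      ‖g x - g x₀‖ ≤ (N x' + β * max (dist x x₀ - τ) 0) * dist x x₀ := by
  set r := dist x x₀
  set m := max (r - τ) 0
  have hr : 0 ≤ r := dist_nonneg
  have hrm : r * (m / r) = m := by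
    rcases hr.eq_or_lt with h | h
    · simp [m, ← h, hτ]
    · field_simp
  let y : ℝ → E := AffineMap.lineMap x₀ x
  have hφ : ∀ s t, N (y s) ≤ N (y t) + β * r * dist s t := fun s t => by
    simpa [y, dist_lineMap_lineMap, dist_comm x₀ x, r, mul_comm, mul_left_comm] using
      hN (y s) (y t)
  have ht₀ : m / r ∈ Icc (0 : ℝ) 1 :=
    ⟨div_nonneg (le_max_right _ _) hr, div_le_one_of_le₀ (max_le (by linarith) hr) hr⟩
  obtain ⟨t₁, ht₁, hle⟩ := exists_mem_Icc_forall_le_add_mul hφ ht₀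
  refine ⟨y t₁, ?_, ?_⟩
  · rw [dist_comm, dist_lineMap_right, Real.norm_eq_abs, abs_of_nonneg (by linarith [ht₁.2]),
      dist_comm]
    have := mul_le_mul_of_nonneg_left ht₁.1 hr
    have : r - τ ≤ m := le_max_left _ _
    nlinarith
  · have hderiv : ∀ t, HasDerivAt (g ∘ y) (g' (y t) (x - x₀)) t := fun t => by
      simpa using (hg (y t)).comp_hasDerivAt t AffineMap.hasDerivAt_lineMap
    have hbound : ∀ t ∈ Ico (0 : ℝ) 1, ‖g' (y t) (x - x₀)‖ ≤ (N (y t₁) + β * m) * r := by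
      intro t ht
      have := hle t (Ico_subset_Icc_self ht)
      rw [sub_zero, mul_assoc, hrm] at this
      calc ‖g' (y t) (x - x₀)‖ ≤ N (y t) * r := by
            simpa only [r, dist_eq_norm] using hg'N (y t) (x - x₀)
        _ ≤ (N (y t₁) + β * m) * r := mul_le_mul_of_nonneg_right this hr
    simpa [y] using norm_image_sub_le_of_norm_deriv_le_segment_01'
      (fun t _ => (hderiv t).hasDerivWithinAt) hbound

end MeanValue

attribute [local instance] Matrix.frobeniusNormedAddCommGroup

section Frobenius

variable {l m n : Type*} [Fintype l] [Fintype m] [Fintype n]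

theorem norm_toLp_two_sq (v : n → ℝ) : ‖toLp 2 v‖ ^ 2 = v ⬝ᵥ v := by
  rw [← real_inner_self_eq_norm_sq, EuclideanSpace.inner_toLp_toLp, star_trivial]

theorem norm_toLp_two_eq_sqrt_dotProduct (v : n → ℝ) : ‖toLp 2 v‖ = √(v ⬝ᵥ v) := by
  rw [← norm_toLp_two_sq, Real.sqrt_sq (norm_nonneg _)]

theorem dist_toLp_two_eq_sqrt_dotProduct (v w : n → ℝ) :
    dist (toLp 2 v) (toLp 2 w) = √((v - w) ⬝ᵥ (v - w)) := by
  rw [dist_eq_norm, ← toLp_sub, norm_toLp_two_eq_sqrt_dotProduct]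

theorem Matrix.frobenius_norm_mulVec_le {𝕜 : Type*} [RCLike 𝕜] (M : Matrix m n 𝕜) (v : n → 𝕜) :
    ‖toLp 2 (M *ᵥ v)‖ ≤ ‖M‖ * ‖toLp 2 v‖ := by
  simpa only [← frobenius_norm_replicateCol (ι := Unit), ← replicateCol_mulVec] using
    frobenius_norm_mul M (replicateCol Unit v)

theorem Matrix.trace_transpose_mul_self_eq_frobenius_norm_sq (M : Matrix m n ℝ) :
    (Mᵀ * M).trace = ‖M‖ ^ 2 := by
  rw [frobenius_norm_def, ← Real.sqrt_eq_rpow, Real.sq_sqrt (by positivity), Finset.sum_comm]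
  simp [trace, mul_apply, sq]

theorem Matrix.trace_transpose_mul_gram_mul (B : Matrix l m ℝ) (M : Matrix m n ℝ) :
    (Mᵀ * (Bᵀ * B) * M).trace = ‖B * M‖ ^ 2 := by
  rw [← trace_transpose_mul_self_eq_frobenius_norm_sq, transpose_mul, Matrix.mul_assoc,
    Matrix.mul_assoc, Matrix.mul_assoc]

theorem Matrix.dotProduct_gram_mulVec (B : Matrix l m ℝ) (v : m → ℝ) :
    v ⬝ᵥ (Bᵀ * B) *ᵥ v = ‖toLp 2 (B *ᵥ v)‖ ^ 2 := by
  rw [norm_toLp_two_sq, ← mulVec_mulVec, dotProduct_mulVec, vecMul_transpose]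

end Frobenius

theorem HasFDerivAt.toLp_comp_ofLp {𝕜 ι κ : Type*} [NontriviallyNormedField 𝕜] [Fintype ι]
    [Fintype κ] {p : ENNReal} [Fact (1 ≤ p)] {f : (ι → 𝕜) → κ → 𝕜} {f' : (ι → 𝕜) →L[𝕜] κ → 𝕜}
    {x : WithLp p (ι → 𝕜)} (hf : HasFDerivAt f f' (ofLp x)) :
    HasFDerivAt (fun y : WithLp p (ι → 𝕜) => toLp p (f (ofLp y)))
      ((PiLp.continuousLinearEquiv p 𝕜 _).symm.toContinuousLinearMap ∘L f' ∘L
        (PiLp.continuousLinearEquiv p 𝕜 _).toContinuousLinearMap) x :=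
  (PiLp.hasFDerivAt_toLp p _).comp x (hf.comp x (PiLp.hasFDerivAt_ofLp p x))

/-- Pointwise bound (appendix lemma for Theorem 2): if h(x0) = 0 and the transposed
Jacobian is β-smooth in the H-norm, then for every x and τ > 0 there is x' with
‖x - x'‖₂ ≤ τ and
‖h(x)‖_H² ≤ 2(‖∇h(x')ᵀ‖_H² + β²((‖x-x0‖₂ - τ)₊)²)·‖x-x0‖₂². -/
theorem stmt11 {n k : ℕ}
    (H : Matrix (Fin k) (Fin k) ℝ) (hH : H.PosSemidef)
    (h : (Fin n → ℝ) → (Fin k → ℝ))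
    (Dh : (Fin n → ℝ) → Matrix (Fin k) (Fin n) ℝ)
    (hdiff : ∀ x, HasFDerivAt h (LinearMap.toContinuousLinearMap ((Dh x).mulVecLin)) x)
    (β : ℝ)
    (hsmooth : ∀ x1 x2 : Fin n → ℝ,
      Real.sqrt (((Dh x1 - Dh x2)ᵀ * H * (Dh x1 - Dh x2)).trace) ≤
        β * Real.sqrt ((x1 - x2) ⬝ᵥ (x1 - x2)))
    (x0 : Fin n → ℝ) (hx0 : h x0 = 0)
    (x : Fin n → ℝ) (τ : ℝ) (hτ : 0 < τ) :
    ∃ x' : Fin n → ℝ, Real.sqrt ((x - x') ⬝ᵥ (x - x')) ≤ τ ∧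
      h x ⬝ᵥ H.mulVec (h x) ≤
        2 * (((Dh x')ᵀ * H * Dh x').trace +
            β ^ 2 * (max (Real.sqrt ((x - x0) ⬝ᵥ (x - x0)) - τ) 0) ^ 2) *
          ((x - x0) ⬝ᵥ (x - x0)) := by
  obtain ⟨B, rfl⟩ : ∃ B : Matrix (Fin k) (Fin k) ℝ, H = Bᵀ * B := by
    open scoped MatrixOrder in
    simpa only [star_eq_conjTranspose, conjTranspose_eq_transpose_of_trivial] using
      CStarAlgebra.nonneg_iff_eq_star_mul_self.mp hH.nonneg
  have hBh : ∀ z, HasFDerivAt (fun z => B *ᵥ h z)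
      (B.mulVecLin.toContinuousLinearMap ∘L (Dh z).mulVecLin.toContinuousLinearMap) z :=
    fun z => B.mulVecLin.toContinuousLinearMap.hasFDerivAt.comp z (hdiff z)
  have hN : ∀ y₁ y₂ : EuclideanSpace ℝ (Fin n),
      ‖B * Dh (ofLp y₁)‖ ≤ ‖B * Dh (ofLp y₂)‖ + β * dist y₁ y₂ := by
    intro y₁ y₂
    have := hsmooth (ofLp y₁) (ofLp y₂)
    rw [trace_transpose_mul_gram_mul, Real.sqrt_sq (norm_nonneg _), Matrix.mul_sub,
      ← dist_toLp_two_eq_sqrt_dotProduct, toLp_ofLp, toLp_ofLp] at this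
    linarith [norm_sub_norm_le (B * Dh (ofLp y₁)) (B * Dh (ofLp y₂))]
  obtain ⟨x', hx'x, hx'⟩ := exists_dist_le_and_norm_sub_le
    (fun y => (hBh (ofLp y)).toLp_comp_ofLp (p := 2)) (fun y v => by
      show ‖toLp 2 (B *ᵥ (Dh (ofLp y) *ᵥ ofLp v))‖ ≤ _
      simpa only [mulVec_mulVec] using frobenius_norm_mulVec_le (B * Dh (ofLp y)) (ofLp v))
    hN (toLp 2 x0) (toLp 2 x) hτ.le
  refine ⟨ofLp x', ?_, ?_⟩
  · rwa [← dist_toLp_two_eq_sqrt_dotProduct, toLp_ofLp]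
  · simp only [hx0, mulVec_zero, toLp_zero, sub_zero] at hx'
    rw [dotProduct_gram_mulVec, trace_transpose_mul_gram_mul,
      ← dist_toLp_two_eq_sqrt_dotProduct, ← norm_toLp_two_sq, toLp_sub, ← dist_eq_norm]
    calc ‖toLp 2 (B *ᵥ h x)‖ ^ 2 ≤ (_ * dist (toLp 2 x) (toLp 2 x0)) ^ 2 :=
          pow_le_pow_left₀ (norm_nonneg _) hx' 2
      _ ≤ _ := by rw [mul_pow, ← mul_pow β]; gcongr; exact add_sq_le
end

section
/- Let h : R^n -> R^k be differentiable with beta-smooth transposed Jacobian in H-norm: ||nabla h(x1)^T - nabla h(x2)^T||_H <= beta||x1-x2||_2. Then for every x and every tau > 0, there exist points x'_1,...,x'_n with ||x - x'_i||_2 <= tau such that tau^2 * ||nabla h(x)^T||_H^2 <= 3( sum_{i=1}^n ||h(x'_i)||_H^2 + n ||h(x)||_H^2 + n tau^4 beta^2 ). -/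
/-!
Realise the `H`-seminorm as `‖L w‖` for a linear map `L` into Euclidean space (from `H = Bᵀ B`)
and test the Jacobian on the basis vectors `eᵢ`. Along the segment `t ↦ x + t eᵢ` the
derivative of `L (h (x + t eᵢ)) - t L (∇h(x) eᵢ)` has norm at most `β t` (the `H`-norm of a
column is bounded by the `H`-Frobenius norm of the matrix), so the mean value inequality gives
`‖τ ∇h(x) eᵢ‖_H ≤ ‖h(x + τ eᵢ)‖_H + ‖h(x)‖_H + β τ²`. Square with `(a + b + c)² ≤ 3(a² + b² + c²)`
and sum over `i`: the squared `H`-norms of the columns add up to `‖∇h(x)ᵀ‖_H²`.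
-/

open Matrix Set

section LineTaylor

variable {E F : Type*} [NormedAddCommGroup E] [NormedSpace ℝ E] [NormedAddCommGroup F]
  [NormedSpace ℝ F] {f : E → F} {f' : E → E →L[ℝ] F} {x v : E} {τ C : ℝ}

theorem norm_sub_sub_smul_fderiv_apply_le (hf : ∀ y, HasFDerivAt f (f' y) y) (hC : 0 ≤ C)
    (hτ : 0 ≤ τ) (hbound : ∀ t ∈ Icc 0 τ, ‖f' (x + t • v) v - f' x v‖ ≤ C * t) :
    ‖f (x + τ • v) - f x - τ • f' x v‖ ≤ C * τ ^ 2 := by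
  have hg (t : ℝ) : HasDerivAt (fun s : ℝ => f (x + s • v) - s • f' x v)
      (f' (x + t • v) v - f' x v) t := by
    have hline : HasDerivAt (fun s : ℝ => x + s • v) v t := by
      simpa using ((hasDerivAt_id t).smul_const v).const_add x
    have hlin : HasDerivAt (fun s : ℝ => s • f' x v) (f' x v) t := by
      simpa using (hasDerivAt_id' t).smul_const (f' x v)
    exact ((hf _).comp_hasDerivAt t hline).sub hlin
  have hmvt := norm_image_sub_le_of_norm_deriv_le_segment' (fun t _ => (hg t).hasDerivWithinAt)
    (fun t ht => (hbound t (Ico_subset_Icc_self ht)).trans (mul_le_mul_of_nonneg_left ht.2.le hC))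
    τ (right_mem_Icc.2 hτ)
  simpa [sub_right_comm, sq, mul_assoc] using hmvt

theorem mul_norm_fderiv_apply_le (hf : ∀ y, HasFDerivAt f (f' y) y) (hC : 0 ≤ C)
    (hτ : 0 ≤ τ) (hbound : ∀ t ∈ Icc 0 τ, ‖f' (x + t • v) v - f' x v‖ ≤ C * t) :
    τ * ‖f' x v‖ ≤ ‖f (x + τ • v)‖ + ‖f x‖ + C * τ ^ 2 :=
  calc τ * ‖f' x v‖ = ‖(f (x + τ • v) - f x) - (f (x + τ • v) - f x - τ • f' x v)‖ := by
        rw [sub_sub_cancel, norm_smul, Real.norm_of_nonneg hτ]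
    _ ≤ ‖f (x + τ • v) - f x‖ + ‖f (x + τ • v) - f x - τ • f' x v‖ := norm_sub_le _ _
    _ ≤ ‖f (x + τ • v)‖ + ‖f x‖ + C * τ ^ 2 :=
        add_le_add (norm_sub_le _ _) (norm_sub_sub_smul_fderiv_apply_le hf hC hτ hbound)

theorem sq_mul_norm_sq_fderiv_apply_le (hf : ∀ y, HasFDerivAt f (f' y) y) (hC : 0 ≤ C)
    (hτ : 0 ≤ τ) (hbound : ∀ t ∈ Icc 0 τ, ‖f' (x + t • v) v - f' x v‖ ≤ C * t) :
    τ ^ 2 * ‖f' x v‖ ^ 2 ≤ 3 * (‖f (x + τ • v)‖ ^ 2 + ‖f x‖ ^ 2 + C ^ 2 * τ ^ 4) := by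
  have h := mul_norm_fderiv_apply_le hf hC hτ hbound
  have h0 : 0 ≤ τ * ‖f' x v‖ := by positivity
  nlinarith [sq_nonneg (‖f (x + τ • v)‖ - ‖f x‖), sq_nonneg (‖f (x + τ • v)‖ - C * τ ^ 2),
    sq_nonneg (‖f x‖ - C * τ ^ 2), mul_le_mul h h h0 (h0.trans h)]

end LineTaylor

namespace Matrix

variable {m n : Type*} [Fintype m] [Fintype n]

theorem trace_transpose_mul_mul_eq_sum_col {R : Type*} [CommSemiring R] (H : Matrix m m R)
    (M : Matrix m n R) : (Mᵀ * H * M).trace = ∑ j, M.col j ⬝ᵥ H *ᵥ M.col j := by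
  simp only [trace, diag, mul_apply, transpose_apply, dotProduct, mulVec, col_apply,
    Finset.sum_mul, Finset.mul_sum]
  refine Finset.sum_congr rfl fun j _ => Finset.sum_comm.trans ?_
  simp only [mul_assoc]

theorem PosSemidef.exists_norm_sq_eq [DecidableEq m] {H : Matrix m m ℝ} (hH : H.PosSemidef) :
    ∃ L : (m → ℝ) →L[ℝ] EuclideanSpace ℝ m, ∀ w, ‖L w‖ ^ 2 = w ⬝ᵥ H *ᵥ w := by
  open scoped MatrixOrder Matrix.Norms.L2Operator in
  obtain ⟨B, rfl⟩ := CStarAlgebra.nonneg_iff_eq_star_mul_self.mp hH.nonneg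
  refine ⟨LinearMap.toContinuousLinearMap
    ((WithLp.linearEquiv 2 ℝ (m → ℝ)).symm.toLinearMap ∘ₗ B.mulVecLin), fun w => ?_⟩
  rw [EuclideanSpace.norm_sq_eq, star_eq_conjTranspose, conjTranspose_eq_transpose_of_trivial,
    ← mulVec_mulVec, dotProduct_mulVec, vecMul_transpose]
  simp [dotProduct, sq]

theorem sqrt_dotProduct_self_smul_single_one [DecidableEq n] (t : ℝ) (i : n) :
    √((t • Pi.single i (1 : ℝ)) ⬝ᵥ (t • Pi.single i 1)) = |t| := by
  simp [← sq, Real.sqrt_sq_eq_abs]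

variable {H : Matrix m m ℝ} {E : Type*} [SeminormedAddCommGroup E] [Module ℝ E]
  {L : (m → ℝ) →ₗ[ℝ] E}

theorem norm_col_le_sqrt_trace (hL : ∀ w, ‖L w‖ ^ 2 = w ⬝ᵥ H *ᵥ w) (M : Matrix m n ℝ) (j : n) :
    ‖L (M.col j)‖ ≤ √((Mᵀ * H * M).trace) := by
  refine Real.le_sqrt_of_sq_le ?_
  rw [trace_transpose_mul_mul_eq_sum_col, hL]
  exact Finset.single_le_sum (f := fun j => M.col j ⬝ᵥ H *ᵥ M.col j)
    (fun i _ => hL (M.col i) ▸ sq_nonneg _) (Finset.mem_univ j)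

end Matrix

/-- Converse pointwise bound (appendix lemma for Theorem 2): under β-smoothness of
the transposed Jacobian in the H-norm, for every x and τ > 0 there are points
x'_1, …, x'_n with ‖x - x'_i‖₂ ≤ τ and
τ²‖∇h(x)ᵀ‖_H² ≤ 3(∑_i ‖h(x'_i)‖_H² + n‖h(x)‖_H² + n τ⁴ β²). -/
theorem stmt12 {n k : ℕ}
    (H : Matrix (Fin k) (Fin k) ℝ) (hH : H.PosSemidef)
    (h : (Fin n → ℝ) → (Fin k → ℝ))
    (Dh : (Fin n → ℝ) → Matrix (Fin k) (Fin n) ℝ)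
    (hdiff : ∀ x, HasFDerivAt h (LinearMap.toContinuousLinearMap ((Dh x).mulVecLin)) x)
    (β : ℝ)
    (hsmooth : ∀ x1 x2 : Fin n → ℝ,
      Real.sqrt (((Dh x1 - Dh x2)ᵀ * H * (Dh x1 - Dh x2)).trace) ≤
        β * Real.sqrt ((x1 - x2) ⬝ᵥ (x1 - x2)))
    (x : Fin n → ℝ) (τ : ℝ) (hτ : 0 < τ) :
    ∃ x' : Fin n → (Fin n → ℝ),
      (∀ i, Real.sqrt ((x - x' i) ⬝ᵥ (x - x' i)) ≤ τ) ∧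
      τ ^ 2 * ((Dh x)ᵀ * H * Dh x).trace ≤
        3 * ((∑ i, h (x' i) ⬝ᵥ H.mulVec (h (x' i))) +
          n * (h x ⬝ᵥ H.mulVec (h x)) + n * τ ^ 4 * β ^ 2) := by
  obtain ⟨L, hL⟩ := hH.exists_norm_sq_eq
  have hderiv (y : Fin n → ℝ) : HasFDerivAt (L ∘ h) (L.comp (LinearMap.toContinuousLinearMap
      (Dh y).mulVecLin)) y := L.hasFDerivAt.comp y (hdiff y)
  have hbound (i : Fin n) : ∀ t ∈ Icc 0 τ,
      ‖L (Dh (x + t • Pi.single i 1) *ᵥ Pi.single i 1) - L (Dh x *ᵥ Pi.single i 1)‖ ≤ |β| * t := by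
    intro t ht
    rw [← map_sub, ← sub_mulVec, mulVec_single_one]
    calc _ ≤ _ := norm_col_le_sqrt_trace (L := L.toLinearMap) hL _ i
      _ ≤ β * |t| := by
        have := hsmooth (x + t • Pi.single i 1) x
        rwa [add_sub_cancel_left, sqrt_dotProduct_self_smul_single_one] at this
      _ ≤ |β| * t := by
        rw [abs_of_nonneg ht.1]; exact mul_le_mul_of_nonneg_right (le_abs_self β) ht.1
  refine ⟨fun i => x + τ • Pi.single i 1, fun i => ?_, ?_⟩
  · rw [sub_add_cancel_left, ← neg_smul, sqrt_dotProduct_self_smul_single_one, abs_neg,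
      abs_of_pos hτ]
  · have key (i : Fin n) := sq_mul_norm_sq_fderiv_apply_le hderiv (abs_nonneg β) hτ.le (hbound i)
    simp only [Function.comp_apply, ContinuousLinearMap.comp_apply,
      LinearMap.coe_toContinuousLinearMap', mulVecLin_apply, hL, mulVec_single_one, sq_abs] at key
    rw [trace_transpose_mul_mul_eq_sum_col, Finset.mul_sum]
    refine (Finset.sum_le_sum fun i _ => key i).trans_eq ?_
    simp only [Finset.sum_add_distrib, ← Finset.mul_sum, Finset.sum_const, Finset.card_univ,
      Fintype.card_fin, nsmul_eq_mul]
    ring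
end

section
/- Let f_T : R^n -> R^d and f_S : R^n -> R^m, let H_T (d x d) and H_S (m x m) be positive semidefinite, and let D be a distribution on R^n. Suppose g~_{S,T} : R^d -> R^m, given by g~_{S,T}(w) = W w + b with W in R^{m x d} of full column rank (d < m), minimizes ||f_S - g∘f_T||_{D,H_S} over affine g. Then min over affine maps g' : R^m -> R^d of ||f_T - g'∘f_S||_{D,H_T} satisfies: min_{g'} ||f_T - g'∘f_S||_{D,H_T} <= sqrt( ||(W^T W)^{-1}||_F * ||H_T||_F ) * ||f_S - g~_{S,T}∘f_T||_{D}, where ||h||_{D,H}^2 = E_{x~D} h(x)^T H h(x) and ||h||_D^2 = E_{x~D}||h(x)||_2^2. -/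
/-!
The left inverse `A = (WᵀW)⁻¹Wᵀ` of `W` turns the residual of `w ↦ W w + b` into a residual of
the candidate `y ↦ A y - A b`: `f_T - (A f_S - A b) = -A (f_S - (W f_T + b))`, since `A W = 1`.
Pointwise, `(A v)ᵀ H_T (A v) ≤ ‖H_T‖_F ‖A v‖²` by Cauchy–Schwarz, and
with `u = A v`, `‖u‖² = ⟪Aᵀ u, v⟫ ≤ ‖Aᵀ u‖ ‖v‖` and `‖Aᵀ u‖² = ⟪u, A Aᵀ u⟫ ≤ ‖A Aᵀ‖_F ‖u‖²` give
`‖A v‖² ≤ ‖A Aᵀ‖_F ‖v‖² = ‖(WᵀW)⁻¹‖_F ‖v‖²`. Integrating gives the bound.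
-/

open MeasureTheory Matrix

namespace Matrix

variable {ι κ : Type*} [Fintype ι] [Fintype κ]

lemma isUnit_of_rank_eq_card [DecidableEq ι] {K : Type*} [Field K] {M : Matrix ι ι K}
    (h : M.rank = Fintype.card ι) : IsUnit M :=
  mulVec_surjective_iff_isUnit.mp <| LinearMap.range_eq_top.mp <|
    Submodule.eq_top_of_finrank_eq (h.trans (Module.finrank_fintype_fun_eq_card K).symm)

lemma dotProduct_self_nonneg_real (v : ι → ℝ) : 0 ≤ v ⬝ᵥ v :=
  Finset.sum_nonneg fun i _ => mul_self_nonneg (v i)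

lemma dotProduct_sq_le (u w : ι → ℝ) : (u ⬝ᵥ w) ^ 2 ≤ (u ⬝ᵥ u) * (w ⬝ᵥ w) := by
  simpa only [dotProduct, sq] using Finset.sum_mul_sq_le_sq_mul_sq Finset.univ u w

lemma mulVec_dotProduct_self_le (M : Matrix κ ι ℝ) (v : ι → ℝ) :
    M *ᵥ v ⬝ᵥ M *ᵥ v ≤ (∑ i, ∑ j, M i j ^ 2) * (v ⬝ᵥ v) := by
  rw [dotProduct, Finset.sum_mul]
  refine Finset.sum_le_sum fun i _ => ?_
  simpa only [mulVec, dotProduct, sq] using Finset.sum_mul_sq_le_sq_mul_sq Finset.univ (M i) v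

lemma dotProduct_mulVec_self_le (M : Matrix ι ι ℝ) (u : ι → ℝ) :
    u ⬝ᵥ M *ᵥ u ≤ √(∑ i, ∑ j, M i j ^ 2) * (u ⬝ᵥ u) := by
  have hF : 0 ≤ ∑ i, ∑ j, M i j ^ 2 := by positivity
  have hsq : (u ⬝ᵥ M *ᵥ u) ^ 2 ≤ (√(∑ i, ∑ j, M i j ^ 2) * (u ⬝ᵥ u)) ^ 2 := by
    calc (u ⬝ᵥ M *ᵥ u) ^ 2 ≤ (u ⬝ᵥ u) * (M *ᵥ u ⬝ᵥ M *ᵥ u) := dotProduct_sq_le _ _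
      _ ≤ (u ⬝ᵥ u) * ((∑ i, ∑ j, M i j ^ 2) * (u ⬝ᵥ u)) :=
        mul_le_mul_of_nonneg_left (mulVec_dotProduct_self_le M u) (dotProduct_self_nonneg_real u)
      _ = (√(∑ i, ∑ j, M i j ^ 2) * (u ⬝ᵥ u)) ^ 2 := by rw [mul_pow, Real.sq_sqrt hF]; ring
  exact (abs_le_of_sq_le_sq' hsq
    (mul_nonneg (Real.sqrt_nonneg _) (dotProduct_self_nonneg_real u))).2

lemma mulVec_dotProduct_self_le_mul_transpose (A : Matrix κ ι ℝ) (v : ι → ℝ) :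
    A *ᵥ v ⬝ᵥ A *ᵥ v ≤ √(∑ i, ∑ j, (A * Aᵀ) i j ^ 2) * (v ⬝ᵥ v) := by
  set u := A *ᵥ v
  set F := √(∑ i, ∑ j, (A * Aᵀ) i j ^ 2)
  have hu : u ⬝ᵥ u = Aᵀ *ᵥ u ⬝ᵥ v := by
    rw [dotProduct_mulVec, mulVec_transpose]
  have hAu : Aᵀ *ᵥ u ⬝ᵥ Aᵀ *ᵥ u = u ⬝ᵥ (A * Aᵀ) *ᵥ u := by
    rw [← mulVec_mulVec, dotProduct_mulVec u A, mulVec_transpose]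
  have hsq : (u ⬝ᵥ u) * (u ⬝ᵥ u) ≤ (u ⬝ᵥ u) * (F * (v ⬝ᵥ v)) := by
    calc (u ⬝ᵥ u) * (u ⬝ᵥ u) = (Aᵀ *ᵥ u ⬝ᵥ v) ^ 2 := by rw [hu, sq]
      _ ≤ (Aᵀ *ᵥ u ⬝ᵥ Aᵀ *ᵥ u) * (v ⬝ᵥ v) := dotProduct_sq_le _ _
      _ ≤ F * (u ⬝ᵥ u) * (v ⬝ᵥ v) := by
        rw [hAu]
        exact mul_le_mul_of_nonneg_right (dotProduct_mulVec_self_le _ u)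
          (dotProduct_self_nonneg_real v)
      _ = (u ⬝ᵥ u) * (F * (v ⬝ᵥ v)) := by ring
  rcases (dotProduct_self_nonneg_real u).eq_or_lt with h0 | h0
  · rw [← h0]
    exact mul_nonneg (Real.sqrt_nonneg _) (dotProduct_self_nonneg_real v)
  · exact le_of_mul_le_mul_left hsq h0

lemma mulVec_dotProduct_mulVec_mulVec_le (A : Matrix κ ι ℝ) (H : Matrix κ κ ℝ) (v : ι → ℝ) :
    A *ᵥ v ⬝ᵥ H *ᵥ (A *ᵥ v) ≤
      √(∑ i, ∑ j, (A * Aᵀ) i j ^ 2) * √(∑ i, ∑ j, H i j ^ 2) * (v ⬝ᵥ v) :=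
  calc A *ᵥ v ⬝ᵥ H *ᵥ (A *ᵥ v) ≤ √(∑ i, ∑ j, H i j ^ 2) * (A *ᵥ v ⬝ᵥ A *ᵥ v) :=
        dotProduct_mulVec_self_le H _
    _ ≤ √(∑ i, ∑ j, H i j ^ 2) * (√(∑ i, ∑ j, (A * Aᵀ) i j ^ 2) * (v ⬝ᵥ v)) :=
        mul_le_mul_of_nonneg_left (mulVec_dotProduct_self_le_mul_transpose A v)
          (Real.sqrt_nonneg _)
    _ = _ := by ring

variable [DecidableEq ι]

lemma inv_transpose_mul_self_mul_transpose_mul_transpose {W : Matrix κ ι ℝ}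
    (hW : IsUnit (Wᵀ * W).det) :
    (Wᵀ * W)⁻¹ * Wᵀ * ((Wᵀ * W)⁻¹ * Wᵀ)ᵀ = (Wᵀ * W)⁻¹ := by
  rw [transpose_mul, transpose_transpose, transpose_nonsing_inv, transpose_mul,
    transpose_transpose, Matrix.mul_assoc, ← Matrix.mul_assoc Wᵀ, mul_nonsing_inv _ hW,
    Matrix.mul_one]

end Matrix

lemma sub_affine_eq_neg_mulVec_residual {ι κ R : Type*} [Fintype ι] [Fintype κ] [DecidableEq ι]
    [CommRing R] {A : Matrix ι κ R} {W : Matrix κ ι R} (hAW : A * W = 1)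
    (y : ι → R) (z b : κ → R) :
    y - (A *ᵥ z + -(A *ᵥ b)) = -(A *ᵥ (z - (W *ᵥ y + b))) := by
  rw [mulVec_sub, mulVec_add, mulVec_mulVec, hAW, one_mulVec]
  abel

theorem stmt16_general {n d m : ℕ}
    (μ : Measure (Fin n → ℝ))
    (fT : (Fin n → ℝ) → (Fin d → ℝ)) (fS : (Fin n → ℝ) → (Fin m → ℝ))
    (HT : Matrix (Fin d) (Fin d) ℝ)
    (W : Matrix (Fin m) (Fin d) ℝ) (b : Fin m → ℝ) (hWrank : W.rank = d)
    (hIntT : ∀ (W' : Matrix (Fin d) (Fin m) ℝ) (b' : Fin d → ℝ),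
      Integrable (fun x => (fT x - (W'.mulVec (fS x) + b')) ⬝ᵥ
        HT.mulVec (fT x - (W'.mulVec (fS x) + b'))) μ)
    (hInt2 : Integrable (fun x => (fS x - (W.mulVec (fT x) + b)) ⬝ᵥ
        (fS x - (W.mulVec (fT x) + b))) μ) :
    (⨅ p : Matrix (Fin d) (Fin m) ℝ × (Fin d → ℝ),
        Real.sqrt (∫ x, (fT x - ((p.1).mulVec (fS x) + p.2)) ⬝ᵥ
          HT.mulVec (fT x - ((p.1).mulVec (fS x) + p.2)) ∂μ)) ≤
      Real.sqrt (Real.sqrt (∑ i, ∑ j, ((Wᵀ * W)⁻¹ i j) ^ 2) *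
          Real.sqrt (∑ i, ∑ j, (HT i j) ^ 2)) *
        Real.sqrt (∫ x, (fS x - (W.mulVec (fT x) + b)) ⬝ᵥ
          (fS x - (W.mulVec (fT x) + b)) ∂μ) := by
  have hdet : IsUnit (Wᵀ * W).det := (isUnit_iff_isUnit_det _).mp <| isUnit_of_rank_eq_card <| by
    rw [rank_transpose_mul_self, hWrank, Fintype.card_fin]
  set A := (Wᵀ * W)⁻¹ * Wᵀ
  have hAW : A * W = 1 := by rw [Matrix.mul_assoc]; exact nonsing_inv_mul _ hdet
  have hbound :
      ∫ x, (fT x - (A *ᵥ fS x + -(A *ᵥ b))) ⬝ᵥ HT *ᵥ (fT x - (A *ᵥ fS x + -(A *ᵥ b))) ∂μ ≤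
      √(∑ i, ∑ j, (Wᵀ * W)⁻¹ i j ^ 2) * √(∑ i, ∑ j, HT i j ^ 2) *
        ∫ x, (fS x - (W *ᵥ fT x + b)) ⬝ᵥ (fS x - (W *ᵥ fT x + b)) ∂μ := by
    rw [← integral_const_mul]
    refine integral_mono (hIntT A _) (hInt2.const_mul _) fun x => ?_
    simp only [sub_affine_eq_neg_mulVec_residual hAW, mulVec_neg, neg_dotProduct, dotProduct_neg,
      neg_neg]
    rw [← inv_transpose_mul_self_mul_transpose_mul_transpose hdet]
    exact mulVec_dotProduct_mulVec_mulVec_le A HT _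
  refine (ciInf_le ⟨0, ?_⟩ (A, -(A *ᵥ b))).trans ?_
  · rintro _ ⟨p, rfl⟩
    exact Real.sqrt_nonneg _
  rw [← Real.sqrt_mul (by positivity)]
  exact Real.sqrt_le_sqrt hbound

/-- Theorem 6 (prop:5), case d < m: if g~_{S,T}(w) = W w + b (with W of full column
rank) minimizes ‖f_S - g∘f_T‖_{D,H_S} over affine g, then
min_{g'} ‖f_T - g'∘f_S‖_{D,H_T} ≤ sqrt(‖(WᵀW)⁻¹‖_F ‖H_T‖_F) · ‖f_S - g~_{S,T}∘f_T‖_D. -/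
theorem stmt16 {n d m : ℕ} (hdm : d < m)
    (μ : Measure (Fin n → ℝ)) [IsProbabilityMeasure μ]
    (fT : (Fin n → ℝ) → (Fin d → ℝ)) (fS : (Fin n → ℝ) → (Fin m → ℝ))
    (HT : Matrix (Fin d) (Fin d) ℝ) (hHT : HT.PosSemidef)
    (HS : Matrix (Fin m) (Fin m) ℝ) (hHS : HS.PosSemidef)
    (W : Matrix (Fin m) (Fin d) ℝ) (b : Fin m → ℝ) (hWrank : W.rank = d)
    (hIntS : ∀ (W' : Matrix (Fin m) (Fin d) ℝ) (b' : Fin m → ℝ),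
      Integrable (fun x => (fS x - (W'.mulVec (fT x) + b')) ⬝ᵥ
        HS.mulVec (fS x - (W'.mulVec (fT x) + b'))) μ)
    (hIntT : ∀ (W' : Matrix (Fin d) (Fin m) ℝ) (b' : Fin d → ℝ),
      Integrable (fun x => (fT x - (W'.mulVec (fS x) + b')) ⬝ᵥ
        HT.mulVec (fT x - (W'.mulVec (fS x) + b'))) μ)
    (hInt2 : Integrable (fun x => (fS x - (W.mulVec (fT x) + b)) ⬝ᵥ
        (fS x - (W.mulVec (fT x) + b))) μ)
    (hmin : ∀ (W' : Matrix (Fin m) (Fin d) ℝ) (b' : Fin m → ℝ),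
      (∫ x, (fS x - (W.mulVec (fT x) + b)) ⬝ᵥ
          HS.mulVec (fS x - (W.mulVec (fT x) + b)) ∂μ) ≤
        ∫ x, (fS x - (W'.mulVec (fT x) + b')) ⬝ᵥ
          HS.mulVec (fS x - (W'.mulVec (fT x) + b')) ∂μ) :
    (⨅ p : Matrix (Fin d) (Fin m) ℝ × (Fin d → ℝ),
        Real.sqrt (∫ x, (fT x - ((p.1).mulVec (fS x) + p.2)) ⬝ᵥ
          HT.mulVec (fT x - ((p.1).mulVec (fS x) + p.2)) ∂μ)) ≤
      Real.sqrt (Real.sqrt (∑ i, ∑ j, ((Wᵀ * W)⁻¹ i j) ^ 2) *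
          Real.sqrt (∑ i, ∑ j, (HT i j) ^ 2)) *
        Real.sqrt (∫ x, (fS x - (W.mulVec (fT x) + b)) ⬝ᵥ
          (fS x - (W.mulVec (fT x) + b)) ∂μ) :=
  stmt16_general μ fT fS HT W b hWrank hIntT hInt2
end
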